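/- arXiv:2410.02188 — 2 statements merged into one kernel-verified Lean document; each statement's English description precedes it below -/
import Mathlib

section
/- Let Q ∈ ℝ^{n×n} be symmetric positive definite, A ∈ ℝ^{m×n}, b ∈ ℝᵐ, d ∈ ℝⁿ and τ > 0. Suppose y* ∈ ℝᵐ satisfies (A Q⁻¹ Aᵀ) y* = −(A Q⁻¹ d + b) and ‖y*‖₂ ≤ τ. Then y* maximizes y ↦ −(1/2)(d + Aᵀy)ᵀ Q⁻¹ (d + Aᵀy) − bᵀ y over {y ∈ ℝᵐ : ‖y‖₂ ≤ τ}, and consequently u* := Q⁻¹(d + Aᵀ y*) is the unique global minimizer of u ↦ (1/2) uᵀ Q u − dᵀ u + τ‖A u + b‖₂ over ℝⁿ. -/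
/-!
The point `u* = Q⁻¹(d + Aᵀy*)` satisfies `Au* + b = 0` by the linear equation for `y*`.
The dual objective is a concave quadratic whose gradient at `y*` is `-(Au* + b) = 0`, so `y*`
maximizes it even on all of `ℝᵐ`. For the primal, `Qu* - d = Aᵀy*` gives
`P(u* + h) - P(u*) = ½ hᵀQh + (y*ᵀAh + τ‖Ah‖₂)`, and the bracket is nonnegative by
Cauchy–Schwarz and `‖y*‖₂ ≤ τ`, while `hᵀQh > 0` for `h ≠ 0`.
-/

open Matrix

noncomputable def norm2 {k : ℕ} (v : Fin k → ℝ) : ℝ := Real.sqrt (∑ i, v i ^ 2)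

noncomputable def primalObj {m n : ℕ} (Q : Matrix (Fin n) (Fin n) ℝ)
    (A : Matrix (Fin m) (Fin n) ℝ) (b : Fin m → ℝ) (d : Fin n → ℝ) (τ : ℝ)
    (u : Fin n → ℝ) : ℝ :=
  1 / 2 * (u ⬝ᵥ Q.mulVec u) - d ⬝ᵥ u + τ * norm2 (A.mulVec u + b)

noncomputable def dualObj {m n : ℕ} (Q : Matrix (Fin n) (Fin n) ℝ)
    (A : Matrix (Fin m) (Fin n) ℝ) (b : Fin m → ℝ) (d : Fin n → ℝ)
    (y : Fin m → ℝ) : ℝ :=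
  -(1 / 2) * ((d + Aᵀ.mulVec y) ⬝ᵥ Q⁻¹.mulVec (d + Aᵀ.mulVec y)) - b ⬝ᵥ y

lemma neg_norm2_mul_norm2_le_dotProduct {k : ℕ} (v w : Fin k → ℝ) :
    -(norm2 v * norm2 w) ≤ v ⬝ᵥ w := by
  refine neg_le_of_abs_le ?_
  rw [norm2, norm2, ← Real.sqrt_mul (by positivity), ← Real.sqrt_sq_eq_abs]
  apply Real.sqrt_le_sqrt
  simpa [dotProduct] using Finset.sum_mul_sq_le_sq_mul_sq Finset.univ v w

section SymmetricQuadraticForm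

variable {ι R : Type*} [Fintype ι] [CommRing R] {S : Matrix ι ι R}

lemma Matrix.IsSymm.dotProduct_mulVec_comm (hS : S.IsSymm) (a c : ι → R) :
    a ⬝ᵥ S *ᵥ c = S *ᵥ a ⬝ᵥ c := by
  rw [dotProduct_mulVec, ← vecMul_transpose, hS.eq]

lemma Matrix.IsSymm.add_dotProduct_mulVec_add (hS : S.IsSymm) (a c : ι → R) :
    (a + c) ⬝ᵥ S *ᵥ (a + c) = a ⬝ᵥ S *ᵥ a + 2 * (S *ᵥ a ⬝ᵥ c) + c ⬝ᵥ S *ᵥ c := by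
  have hca : c ⬝ᵥ S *ᵥ a = S *ᵥ a ⬝ᵥ c := dotProduct_comm _ _
  rw [mulVec_add, dotProduct_add, add_dotProduct, add_dotProduct, hca,
    hS.dotProduct_mulVec_comm a c]
  ring

end SymmetricQuadraticForm

section ProximalProblem

variable {m n : ℕ} {Q : Matrix (Fin n) (Fin n) ℝ} {A : Matrix (Fin m) (Fin n) ℝ}
  {b : Fin m → ℝ} {d : Fin n → ℝ}

lemma mulVec_inv_mulVec_add_eq_zero {y : Fin m → ℝ}
    (hy : (A * Q⁻¹ * Aᵀ) *ᵥ y = -(A *ᵥ (Q⁻¹ *ᵥ d) + b)) :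
    A *ᵥ (Q⁻¹ *ᵥ (d + Aᵀ *ᵥ y)) + b = 0 := by
  have hAQA : A *ᵥ (Q⁻¹ *ᵥ (Aᵀ *ᵥ y)) = (A * Q⁻¹ * Aᵀ) *ᵥ y := by
    simp only [mulVec_mulVec, Matrix.mul_assoc]
  rw [mulVec_add, mulVec_add, hAQA, hy]
  abel

lemma dualObj_add (hQ : (Q⁻¹).IsSymm) (y z : Fin m → ℝ) :
    dualObj Q A b d (y + z) = dualObj Q A b d y - (A *ᵥ (Q⁻¹ *ᵥ (d + Aᵀ *ᵥ y)) + b) ⬝ᵥ z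
      - 1 / 2 * (Aᵀ *ᵥ z ⬝ᵥ Q⁻¹ *ᵥ (Aᵀ *ᵥ z)) := by
  have hcross : Q⁻¹ *ᵥ (d + Aᵀ *ᵥ y) ⬝ᵥ Aᵀ *ᵥ z = A *ᵥ (Q⁻¹ *ᵥ (d + Aᵀ *ᵥ y)) ⬝ᵥ z := by
    rw [dotProduct_mulVec, vecMul_transpose]
  rw [dualObj, dualObj, mulVec_add, ← add_assoc, hQ.add_dotProduct_mulVec_add, hcross]
  simp only [add_dotProduct, dotProduct_add]
  ring

theorem dualObj_le_of_mulVec_add_eq_zero (hQ : (Q⁻¹).PosSemidef) {y : Fin m → ℝ}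
    (hy : A *ᵥ (Q⁻¹ *ᵥ (d + Aᵀ *ᵥ y)) + b = 0) (y' : Fin m → ℝ) :
    dualObj Q A b d y' ≤ dualObj Q A b d y := by
  have hQsymm : (Q⁻¹).IsSymm := isHermitian_iff_isSymm.mp hQ.1
  have hnonneg := hQ.dotProduct_mulVec_nonneg (Aᵀ *ᵥ (y' - y))
  rw [star_trivial] at hnonneg
  have hexpand := dualObj_add (A := A) (b := b) (d := d) hQsymm y (y' - y)
  rw [add_sub_cancel, hy, zero_dotProduct] at hexpand
  linarith

theorem primalObj_lt_of_mulVec_eq (hQ : Q.PosDef) {τ : ℝ} {u : Fin n → ℝ} {y : Fin m → ℝ}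
    (hu : Q *ᵥ u = d + Aᵀ *ᵥ y) (hAu : A *ᵥ u + b = 0) (hy : norm2 y ≤ τ)
    {v : Fin n → ℝ} (hv : v ≠ u) :
    primalObj Q A b d τ u < primalObj Q A b d τ v := by
  obtain ⟨h, rfl⟩ : ∃ h, v = u + h := ⟨v - u, by abel⟩
  have hh : h ≠ 0 := fun h0 => hv (by rw [h0, add_zero])
  have hQsymm : Q.IsSymm := isHermitian_iff_isSymm.mp hQ.1
  have hcurv : 0 < h ⬝ᵥ Q *ᵥ h := by simpa using hQ.dotProduct_mulVec_pos hh
  have hgrad : Q *ᵥ u ⬝ᵥ h = d ⬝ᵥ h + y ⬝ᵥ A *ᵥ h := by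
    rw [hu, add_dotProduct, dotProduct_comm (Aᵀ *ᵥ y), dotProduct_mulVec, vecMul_transpose,
      dotProduct_comm (A *ᵥ h)]
  have hresidual : A *ᵥ (u + h) + b = A *ᵥ h := by
    rw [mulVec_add, add_right_comm, hAu, zero_add]
  have hpenalty : 0 ≤ y ⬝ᵥ A *ᵥ h + τ * norm2 (A *ᵥ h) := by
    have hnonneg : 0 ≤ norm2 (A *ᵥ h) := Real.sqrt_nonneg _
    linarith [neg_norm2_mul_norm2_le_dotProduct y (A *ᵥ h),
      mul_le_mul_of_nonneg_right hy hnonneg]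
  have hzero : norm2 (0 : Fin m → ℝ) = 0 := by simp [norm2]
  rw [primalObj, primalObj, hresidual, hAu, hzero, hQsymm.add_dotProduct_mulVec_add, hgrad,
    dotProduct_add]
  linarith

end ProximalProblem

theorem stmt_13_general {m n : ℕ} (Q : Matrix (Fin n) (Fin n) ℝ) (hQ : Q.PosDef)
    (A : Matrix (Fin m) (Fin n) ℝ) (b : Fin m → ℝ) (d : Fin n → ℝ)
    (τ : ℝ)
    (ystar : Fin m → ℝ)
    (hlin : (A * Q⁻¹ * Aᵀ).mulVec ystar = -(A.mulVec (Q⁻¹.mulVec d) + b))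
    (hfeas : norm2 ystar ≤ τ) :
    (∀ y : Fin m → ℝ, norm2 y ≤ τ → dualObj Q A b d y ≤ dualObj Q A b d ystar) ∧
    (∀ u : Fin n → ℝ, u ≠ Q⁻¹.mulVec (d + Aᵀ.mulVec ystar) →
      primalObj Q A b d τ (Q⁻¹.mulVec (d + Aᵀ.mulVec ystar)) < primalObj Q A b d τ u) := by
  have hresidual := mulVec_inv_mulVec_add_eq_zero hlin
  have hstationary : Q *ᵥ (Q⁻¹ *ᵥ (d + Aᵀ *ᵥ ystar)) = d + Aᵀ *ᵥ ystar := by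
    rw [mulVec_mulVec, mul_nonsing_inv _ hQ.det_pos.ne'.isUnit, one_mulVec]
  exact ⟨fun y _ => dualObj_le_of_mulVec_add_eq_zero hQ.inv.posSemidef hresidual y,
    fun u hu => primalObj_lt_of_mulVec_eq hQ hstationary hresidual hfeas hu⟩

/-- **Theorem `th::thProx-dual-p2`, interior (pseudo-inverse) case.**
If `(AQ⁻¹Aᵀ) y* = −(AQ⁻¹d + b)` and `‖y*‖₂ ≤ τ`, then `y*` maximizes the dual objective
over `{y : ‖y‖₂ ≤ τ}`, and `u* = Q⁻¹(d + Aᵀy*)` is the unique global minimizer of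
`u ↦ (1/2)uᵀQu − dᵀu + τ‖Au + b‖₂`. -/
theorem stmt_13 {m n : ℕ} (Q : Matrix (Fin n) (Fin n) ℝ) (hQ : Q.PosDef)
    (A : Matrix (Fin m) (Fin n) ℝ) (b : Fin m → ℝ) (d : Fin n → ℝ)
    (τ : ℝ) (hτ : 0 < τ)
    (ystar : Fin m → ℝ)
    (hlin : (A * Q⁻¹ * Aᵀ).mulVec ystar = -(A.mulVec (Q⁻¹.mulVec d) + b))
    (hfeas : norm2 ystar ≤ τ) :
    (∀ y : Fin m → ℝ, norm2 y ≤ τ → dualObj Q A b d y ≤ dualObj Q A b d ystar) ∧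
    (∀ u : Fin n → ℝ, u ≠ Q⁻¹.mulVec (d + Aᵀ.mulVec ystar) →
      primalObj Q A b d τ (Q⁻¹.mulVec (d + Aᵀ.mulVec ystar)) < primalObj Q A b d τ u) :=
  stmt_13_general Q hQ A b d τ ystar hlin hfeas
end

section
/- Let Q ∈ ℝ^{n×n} be symmetric positive definite, A ∈ ℝ^{m×n}, b ∈ ℝᵐ, d ∈ ℝⁿ and τ > 0. Suppose α* > 0 satisfies ‖(A Q⁻¹ Aᵀ + α* I)⁻¹ (A Q⁻¹ d + b)‖₂ = τ, and set y* := −(A Q⁻¹ Aᵀ + α* I)⁻¹ (A Q⁻¹ d + b). Then y* maximizes y ↦ −(1/2)(d + Aᵀy)ᵀ Q⁻¹ (d + Aᵀy) − bᵀ y over {y ∈ ℝᵐ : ‖y‖₂ ≤ τ}, and consequently u* := Q⁻¹(d + Aᵀ y*) is the unique global minimizer of u ↦ (1/2) uᵀ Q u − dᵀ u + τ‖A u + b‖₂ over ℝⁿ. -/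
/-!
Write `M = AQ⁻¹Aᵀ` (positive semidefinite) and `c = AQ⁻¹d + b`. The dual objective `D` is a constant
minus `cᵀy + ½ yᵀMy`, and the secular equation says `(M + α*I) y* = -c` with `‖y*‖ = τ`. Hence
`D(y*) - D(y) = ½ (y - y*)ᵀM(y - y*) + α* (τ² - y*ᵀy)`, and both terms are nonnegative on the
ball, the second by Cauchy–Schwarz.

For the primal objective `P` use the Lagrangian `L(u, y) = ½ uᵀQu - dᵀu - yᵀ(Au + b)`.
Cauchy–Schwarz gives `L(u, y*) ≤ P(u)` for every `u`, with equality at `u*` because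
`Au* + b = -α* y*`. Since `Qu* = d + Aᵀy*`, `L(u, y*) - L(u*, y*) = ½ (u - u*)ᵀQ(u - u*)`, which
is positive for `u ≠ u*`.
-/

open Matrix

lemma norm2_eq_norm_toLp {k : ℕ} (v : Fin k → ℝ) :
    norm2 v = ‖(WithLp.toLp 2 v : EuclideanSpace ℝ (Fin k))‖ := by
  simp [norm2, EuclideanSpace.norm_eq]

lemma norm2_nonneg {k : ℕ} (v : Fin k → ℝ) : 0 ≤ norm2 v := Real.sqrt_nonneg _

lemma norm2_smul {k : ℕ} (a : ℝ) (v : Fin k → ℝ) : norm2 (a • v) = |a| * norm2 v := by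
  simp [norm2_eq_norm_toLp, norm_smul]

lemma norm2_neg {k : ℕ} (v : Fin k → ℝ) : norm2 (-v) = norm2 v := by
  simp [norm2_eq_norm_toLp]

lemma dotProduct_self_eq_norm2_sq {k : ℕ} (v : Fin k → ℝ) : v ⬝ᵥ v = norm2 v ^ 2 := by
  rw [norm2_eq_norm_toLp, ← real_inner_self_eq_norm_sq, EuclideanSpace.inner_toLp_toLp]
  simp

lemma dotProduct_le_norm2_mul_norm2 {k : ℕ} (v w : Fin k → ℝ) :
    v ⬝ᵥ w ≤ norm2 v * norm2 w := by
  have := real_inner_le_norm (WithLp.toLp 2 v : EuclideanSpace ℝ (Fin k)) (WithLp.toLp 2 w)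
  rwa [EuclideanSpace.inner_toLp_toLp, star_trivial, dotProduct_comm, ← norm2_eq_norm_toLp,
    ← norm2_eq_norm_toLp] at this

lemma Matrix.IsSymm.dotProduct_mulVec_comm_s14 {k : ℕ} {S : Matrix (Fin k) (Fin k) ℝ} (hS : S.IsSymm)
    (x y : Fin k → ℝ) : x ⬝ᵥ S *ᵥ y = y ⬝ᵥ S *ᵥ x := by
  simpa only [hS.eq] using dotProduct_transpose_mulVec S x y

lemma Matrix.IsSymm.sub_dotProduct_mulVec_sub {k : ℕ} {S : Matrix (Fin k) (Fin k) ℝ}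
    (hS : S.IsSymm) (x y : Fin k → ℝ) :
    (x - y) ⬝ᵥ S *ᵥ (x - y) = x ⬝ᵥ S *ᵥ x - 2 * (y ⬝ᵥ S *ᵥ x) + y ⬝ᵥ S *ᵥ y := by
  simp only [sub_dotProduct, dotProduct_sub, mulVec_sub, hS.dotProduct_mulVec_comm_s14 x y]
  ring

lemma Matrix.transpose_mulVec_dotProduct {m n : ℕ} (A : Matrix (Fin m) (Fin n) ℝ)
    (y : Fin m → ℝ) (v : Fin n → ℝ) : (Aᵀ *ᵥ y) ⬝ᵥ v = y ⬝ᵥ A *ᵥ v := by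
  rw [mulVec_transpose, ← dotProduct_mulVec]

lemma Matrix.mulVec_nonsing_inv_mulVec {k : ℕ} {S : Matrix (Fin k) (Fin k) ℝ}
    (hS : IsUnit S.det) (v : Fin k → ℝ) : S *ᵥ (S⁻¹ *ᵥ v) = v := by
  rw [mulVec_mulVec, mul_nonsing_inv S hS, one_mulVec]

theorem trustRegion_isMaxOn {k : ℕ} {M : Matrix (Fin k) (Fin k) ℝ} (hM : M.PosSemidef)
    {α τ : ℝ} (hα : 0 ≤ α) {c y₀ : Fin k → ℝ} (hy₀ : M *ᵥ y₀ + α • y₀ = -c)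
    (hnorm : norm2 y₀ = τ) :
    IsMaxOn (fun y => -(c ⬝ᵥ y) - 1 / 2 * (y ⬝ᵥ M *ᵥ y)) {y | norm2 y ≤ τ} y₀ := by
  refine isMaxOn_iff.2 fun y (hy : norm2 y ≤ τ) => ?_
  have hMsymm : M.IsSymm := isHermitian_iff_isSymm.1 hM.isHermitian
  have hc : ∀ z, c ⬝ᵥ z = -(y₀ ⬝ᵥ M *ᵥ z) - α * (y₀ ⬝ᵥ z) := fun z => by
    rw [← neg_neg c, ← hy₀, neg_dotProduct, add_dotProduct, smul_dotProduct, smul_eq_mul,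
      dotProduct_comm (M *ᵥ y₀), hMsymm.dotProduct_mulVec_comm_s14]
    ring
  have hconcave : 0 ≤ (y - y₀) ⬝ᵥ M *ᵥ (y - y₀) := by
    simpa using hM.dotProduct_mulVec_nonneg (y - y₀)
  have hcs : y₀ ⬝ᵥ y ≤ τ ^ 2 := by
    calc y₀ ⬝ᵥ y ≤ norm2 y₀ * norm2 y := dotProduct_le_norm2_mul_norm2 y₀ y
      _ ≤ τ ^ 2 := by rw [hnorm, sq]; exact mul_le_mul_of_nonneg_left hy (hnorm ▸ norm2_nonneg y₀)
  have hτ : y₀ ⬝ᵥ y₀ = τ ^ 2 := by rw [dotProduct_self_eq_norm2_sq, hnorm]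
  rw [hc, hc, hτ]
  rw [hMsymm.sub_dotProduct_mulVec_sub] at hconcave
  linarith [mul_nonneg hα (sub_nonneg.2 hcs)]

lemma dualObj_eq {m n : ℕ} {Q : Matrix (Fin n) (Fin n) ℝ} (hQ : Q.IsSymm)
    (A : Matrix (Fin m) (Fin n) ℝ) (b : Fin m → ℝ) (d : Fin n → ℝ) (y : Fin m → ℝ) :
    dualObj Q A b d y = -(1 / 2) * (d ⬝ᵥ Q⁻¹ *ᵥ d) +
      (-((A *ᵥ (Q⁻¹ *ᵥ d) + b) ⬝ᵥ y) - 1 / 2 * (y ⬝ᵥ (A * Q⁻¹ * Aᵀ) *ᵥ y)) := by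
  have hcross : d ⬝ᵥ Q⁻¹ *ᵥ (Aᵀ *ᵥ y) = y ⬝ᵥ A *ᵥ (Q⁻¹ *ᵥ d) := by
    rw [hQ.inv.dotProduct_mulVec_comm_s14, transpose_mulVec_dotProduct]
  have hquad : y ⬝ᵥ A *ᵥ (Q⁻¹ *ᵥ (Aᵀ *ᵥ y)) = y ⬝ᵥ (A * Q⁻¹ * Aᵀ) *ᵥ y := by
    rw [mulVec_mulVec, mulVec_mulVec, Matrix.mul_assoc]
  simp only [dualObj, mulVec_add, dotProduct_add, add_dotProduct, transpose_mulVec_dotProduct,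
    hcross, hquad]
  rw [dotProduct_comm (A *ᵥ (Q⁻¹ *ᵥ d)) y]
  ring

noncomputable def lagrangian {m n : ℕ} (Q : Matrix (Fin n) (Fin n) ℝ)
    (A : Matrix (Fin m) (Fin n) ℝ) (b : Fin m → ℝ) (d : Fin n → ℝ)
    (u : Fin n → ℝ) (y : Fin m → ℝ) : ℝ :=
  1 / 2 * (u ⬝ᵥ Q *ᵥ u) - d ⬝ᵥ u - y ⬝ᵥ (A *ᵥ u + b)

section Lagrangian

variable {m n : ℕ} {Q : Matrix (Fin n) (Fin n) ℝ} {A : Matrix (Fin m) (Fin n) ℝ}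
  {b : Fin m → ℝ} {d : Fin n → ℝ} {τ : ℝ} {u : Fin n → ℝ} {y : Fin m → ℝ}

lemma lagrangian_le_primalObj (hy : norm2 y ≤ τ) :
    lagrangian Q A b d u y ≤ primalObj Q A b d τ u := by
  have hcs : -(y ⬝ᵥ (A *ᵥ u + b)) ≤ τ * norm2 (A *ᵥ u + b) := by
    calc -(y ⬝ᵥ (A *ᵥ u + b)) = -y ⬝ᵥ (A *ᵥ u + b) := (neg_dotProduct _ _).symm
      _ ≤ norm2 (-y) * norm2 (A *ᵥ u + b) := dotProduct_le_norm2_mul_norm2 _ _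
      _ ≤ τ * norm2 (A *ᵥ u + b) := by
        rw [norm2_neg]; exact mul_le_mul_of_nonneg_right hy (norm2_nonneg _)
  unfold lagrangian primalObj
  linarith

lemma primalObj_eq_lagrangian {α : ℝ} (hα : 0 ≤ α) (hy : norm2 y = τ)
    (hu : A *ᵥ u + b = -α • y) : primalObj Q A b d τ u = lagrangian Q A b d u y := by
  have hcompl : τ * norm2 (A *ᵥ u + b) = -(y ⬝ᵥ (A *ᵥ u + b)) := by
    rw [hu, norm2_smul, abs_neg, abs_of_nonneg hα, dotProduct_smul, smul_eq_mul,
      dotProduct_self_eq_norm2_sq, hy]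
    ring
  unfold lagrangian primalObj
  rw [hcompl]
  ring

lemma lagrangian_sub_lagrangian (hQ : Q.IsSymm) {u₀ : Fin n → ℝ}
    (hu₀ : Q *ᵥ u₀ = d + Aᵀ *ᵥ y) :
    lagrangian Q A b d u y - lagrangian Q A b d u₀ y = 1 / 2 * ((u - u₀) ⬝ᵥ Q *ᵥ (u - u₀)) := by
  have hlin : ∀ z, d ⬝ᵥ z + y ⬝ᵥ A *ᵥ z = u₀ ⬝ᵥ Q *ᵥ z := fun z => by
    rw [hQ.dotProduct_mulVec_comm_s14, hu₀, dotProduct_add, dotProduct_comm z d, dotProduct_comm z,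
      transpose_mulVec_dotProduct]
  have hu := hlin u
  have hu₀' := hlin u₀
  unfold lagrangian
  rw [hQ.sub_dotProduct_mulVec_sub, dotProduct_add, dotProduct_add]
  linarith

theorem primalObj_lt_of_kkt (hQ : Q.PosDef) {α : ℝ} (hα : 0 ≤ α) (hy : norm2 y = τ)
    {u₀ : Fin n → ℝ} (hstat : Q *ᵥ u₀ = d + Aᵀ *ᵥ y) (hcompl : A *ᵥ u₀ + b = -α • y)
    (hu : u ≠ u₀) : primalObj Q A b d τ u₀ < primalObj Q A b d τ u := by
  have hgap := lagrangian_sub_lagrangian (u := u) (b := b)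
    (isHermitian_iff_isSymm.1 hQ.isHermitian) hstat
  have hpos : 0 < (u - u₀) ⬝ᵥ Q *ᵥ (u - u₀) := by
    simpa using hQ.dotProduct_mulVec_pos (sub_ne_zero.2 hu)
  calc primalObj Q A b d τ u₀ = lagrangian Q A b d u₀ y := primalObj_eq_lagrangian hα hy hcompl
    _ < lagrangian Q A b d u y := by linarith
    _ ≤ primalObj Q A b d τ u := lagrangian_le_primalObj hy.le

end Lagrangian

theorem stmt_14_general {m n : ℕ} (Q : Matrix (Fin n) (Fin n) ℝ) (hQ : Q.PosDef)
    (A : Matrix (Fin m) (Fin n) ℝ) (b : Fin m → ℝ) (d : Fin n → ℝ)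
    (τ : ℝ)
    (αstar : ℝ) (hα : 0 < αstar)
    (hsec : norm2 ((A * Q⁻¹ * Aᵀ + αstar • (1 : Matrix (Fin m) (Fin m) ℝ))⁻¹.mulVec
      (A.mulVec (Q⁻¹.mulVec d) + b)) = τ)
    (ystar : Fin m → ℝ)
    (hy : ystar = -((A * Q⁻¹ * Aᵀ + αstar • (1 : Matrix (Fin m) (Fin m) ℝ))⁻¹.mulVec
      (A.mulVec (Q⁻¹.mulVec d) + b))) :
    (∀ y : Fin m → ℝ, norm2 y ≤ τ → dualObj Q A b d y ≤ dualObj Q A b d ystar) ∧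
    (∀ u : Fin n → ℝ, u ≠ Q⁻¹.mulVec (d + Aᵀ.mulVec ystar) →
      primalObj Q A b d τ (Q⁻¹.mulVec (d + Aᵀ.mulVec ystar)) < primalObj Q A b d τ u) := by
  set M := A * Q⁻¹ * Aᵀ
  set c := A *ᵥ (Q⁻¹ *ᵥ d) + b
  have hQsymm : Q.IsSymm := isHermitian_iff_isSymm.1 hQ.isHermitian
  have hM : M.PosSemidef := by simpa using hQ.inv.posSemidef.mul_mul_conjTranspose_same A
  have hB : IsUnit (M + αstar • 1).det :=
    (PosDef.posSemidef_add hM (PosDef.one.smul hα)).det_pos.ne'.isUnit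
  have hfoc : M *ᵥ ystar + αstar • ystar = -c := by
    have hBy : (M + αstar • 1) *ᵥ ystar = -c := by
      rw [hy, mulVec_neg, mulVec_nonsing_inv_mulVec hB]
    rwa [add_mulVec, smul_mulVec, one_mulVec] at hBy
  have hnorm : norm2 ystar = τ := by rw [hy, norm2_neg, hsec]
  have hstat := mulVec_nonsing_inv_mulVec hQ.det_pos.ne'.isUnit (d + Aᵀ *ᵥ ystar)
  have hcompl : A *ᵥ (Q⁻¹ *ᵥ (d + Aᵀ *ᵥ ystar)) + b = -αstar • ystar := by
    have hexpand : A *ᵥ (Q⁻¹ *ᵥ (d + Aᵀ *ᵥ ystar)) + b = c + M *ᵥ ystar := by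
      simp only [M, c, mulVec_add, mulVec_mulVec, Matrix.mul_assoc]
      abel
    rw [hexpand]
    linear_combination (norm := module) hfoc
  refine ⟨fun y hy' => ?_, fun u hu => primalObj_lt_of_kkt hQ hα.le hnorm hstat hcompl hu⟩
  rw [dualObj_eq hQsymm, dualObj_eq hQsymm]
  exact (add_le_add_iff_left _).2 (isMaxOn_iff.1 (trustRegion_isMaxOn hM hα.le hfoc hnorm) y hy')

/-- **Theorem `th::thProx-dual-p2`, boundary (secular equation) case.**
If `α* > 0` satisfies `‖(AQ⁻¹Aᵀ + α*I)⁻¹(AQ⁻¹d + b)‖₂ = τ` and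
`y* = −(AQ⁻¹Aᵀ + α*I)⁻¹(AQ⁻¹d + b)`, then `y*` maximizes the dual objective over
`{y : ‖y‖₂ ≤ τ}`, and `u* = Q⁻¹(d + Aᵀy*)` is the unique global minimizer of
`u ↦ (1/2)uᵀQu − dᵀu + τ‖Au + b‖₂`. -/
theorem stmt_14 {m n : ℕ} (Q : Matrix (Fin n) (Fin n) ℝ) (hQ : Q.PosDef)
    (A : Matrix (Fin m) (Fin n) ℝ) (b : Fin m → ℝ) (d : Fin n → ℝ)
    (τ : ℝ) (hτ : 0 < τ)
    (αstar : ℝ) (hα : 0 < αstar)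
    (hsec : norm2 ((A * Q⁻¹ * Aᵀ + αstar • (1 : Matrix (Fin m) (Fin m) ℝ))⁻¹.mulVec
      (A.mulVec (Q⁻¹.mulVec d) + b)) = τ)
    (ystar : Fin m → ℝ)
    (hy : ystar = -((A * Q⁻¹ * Aᵀ + αstar • (1 : Matrix (Fin m) (Fin m) ℝ))⁻¹.mulVec
      (A.mulVec (Q⁻¹.mulVec d) + b))) :
    (∀ y : Fin m → ℝ, norm2 y ≤ τ → dualObj Q A b d y ≤ dualObj Q A b d ystar) ∧
    (∀ u : Fin n → ℝ, u ≠ Q⁻¹.mulVec (d + Aᵀ.mulVec ystar) →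
      primalObj Q A b d τ (Q⁻¹.mulVec (d + Aᵀ.mulVec ystar)) < primalObj Q A b d τ u) :=
  stmt_14_general Q hQ A b d τ αstar hα hsec ystar hy
end
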